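/- arXiv:1402.3119 — 3 statements merged into one kernel-verified Lean document; each statement's English description precedes it below -/
import Mathlib

section
/- Every vertex of the cellular interference graph lies in at most two triangles: for every integer r ≥ 1 and every v ∈ V(r), n_v ≤ 2 (so n_v ∈ {0,1,2}). -/
/-- Vertex set of the cellular interference graph: pairs `(a,b)` identified with
the Eisenstein integer `a + bω`, where `ω = (−1+i√3)/2`, satisfying
`|Re(a+bω)| ≤ r` and `|Im(a+bω)| ≤ (√3/2)r`, i.e. `|2a − b| ≤ 2r` and `|b| ≤ r`. -/
noncomputable def V (r : ℤ) : Finset (ℤ × ℤ) :=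
  (Finset.Icc (-(2 * r)) (2 * r) ×ˢ Finset.Icc (-r) r).filter
    (fun p => |2 * p.1 - p.2| ≤ 2 * r ∧ |p.2| ≤ r)

/-- `f(a,b) = (a+b) mod 3`. -/
def f (p : ℤ × ℤ) : ℤ := (p.1 + p.2) % 3

/-- Triangle index set: `(a,b)` with `f(a,b) ≠ 0` such that all three points
`(a,b)`, `(a,b+1)`, `(a+1,b+1)` lie in `V r`. -/
noncomputable def T (r : ℤ) : Finset (ℤ × ℤ) :=
  (V r).filter (fun p => f p ≠ 0 ∧ (p.1, p.2 + 1) ∈ V r ∧ (p.1 + 1, p.2 + 1) ∈ V r)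

/-- The vertex set of the triangle indexed by `p = (a,b)`:
`{(a,b), (a,b+1), (a+1,b+1)}`. -/
def triVerts (p : ℤ × ℤ) : Finset (ℤ × ℤ) := {p, (p.1, p.2 + 1), (p.1 + 1, p.2 + 1)}

/-- The number `n_v` of triangles of `T r` whose vertex set contains `v`. -/
noncomputable def nTri (r : ℤ) (v : ℤ × ℤ) : ℕ := ((T r).filter (fun p => v ∈ triVerts p)).card

def trianglesThrough (v : ℤ × ℤ) : Finset (ℤ × ℤ) := {v, (v.1, v.2 - 1), (v.1 - 1, v.2 - 1)}

theorem mem_triVerts_iff_mem_trianglesThrough {p v : ℤ × ℤ} :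
    v ∈ triVerts p ↔ p ∈ trianglesThrough v := by
  obtain ⟨a, b⟩ := p
  obtain ⟨c, d⟩ := v
  simp only [triVerts, trianglesThrough, Finset.mem_insert, Finset.mem_singleton, Prod.mk.injEq]
  omega

/-- The values of `f` on the three indices are `f v`, `f v - 1`, `f v - 2` modulo `3`. -/
theorem exists_mem_trianglesThrough_f_eq_zero (v : ℤ × ℤ) :
    ∃ p ∈ trianglesThrough v, f p = 0 := by
  simp only [trianglesThrough, Finset.mem_insert, Finset.mem_singleton, exists_eq_or_imp,
    exists_eq_left, f]
  omega

theorem card_filter_trianglesThrough_f_ne_zero_le_two (v : ℤ × ℤ) :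
    ((trianglesThrough v).filter (fun p => f p ≠ 0)).card ≤ 2 := by
  have hlt : ((trianglesThrough v).filter (fun p => f p ≠ 0)).card < (trianglesThrough v).card :=
    Finset.card_lt_card <| Finset.filter_ssubset.2 <| by
      simpa only [not_not] using exists_mem_trianglesThrough_f_eq_zero v
  exact Nat.le_of_lt_succ (hlt.trans_le Finset.card_le_three)

theorem filter_T_mem_triVerts_subset (r : ℤ) (v : ℤ × ℤ) :
    (T r).filter (fun p => v ∈ triVerts p) ⊆ (trianglesThrough v).filter (fun p => f p ≠ 0) := by
  intro p hp
  simp only [T, Finset.mem_filter, mem_triVerts_iff_mem_trianglesThrough] at hp ⊢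
  exact ⟨hp.2, hp.1.2.1⟩

theorem nTri_le_two_general (r : ℤ) (v : ℤ × ℤ) :
    nTri r v ≤ 2 :=
  (Finset.card_le_card (filter_T_mem_triVerts_subset r v)).trans
    (card_filter_trianglesThrough_f_ne_zero_le_two v)

/-- Every vertex of the cellular interference graph lies in at most two
triangles: `n_v ≤ 2` for every `v ∈ V(r)` (so `n_v ∈ {0,1,2}`). -/
theorem nTri_le_two (r : ℤ) (hr : 1 ≤ r) (v : ℤ × ℤ) (hv : v ∈ V r) :
    nTri r v ≤ 2 :=
  nTri_le_two_general r v
end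

section
/- Lower bound on the number of triangles: for every integer r ≥ 1, 3·|T(r)| ≥ 8r² − 6r (i.e. |T(r)| ≥ (8/3)r² − 2r). -/
open Finset

theorem Int.two_mul_sub_le_three_mul_card_Icc_filter_emod_three_ne_zero (A B c : ℤ) :
    2 * (B - A) ≤ 3 * (#{a ∈ Icc A B | (a + c) % 3 ≠ 0} : ℤ) := by
  rcases lt_or_ge B A with hBA | hAB
  · omega
  -- `a ↦ (a + c) / 3` maps the removed values injectively into an interval a third as long.
  have hremoved :
      #{a ∈ Icc A B | (a + c) % 3 = 0} ≤ #(Icc ((A + c + 2) / 3) ((B + c) / 3)) := by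
    refine card_le_card_of_injOn (fun a => (a + c) / 3) (fun a ha => ?_)
      (fun a ha a' ha' h => ?_)
    · simp only [coe_filter, mem_Icc, Set.mem_ofPred_eq, mem_coe] at ha ⊢
      omega
    · simp only [coe_filter, mem_Icc, Set.mem_ofPred_eq] at ha ha' h
      omega
  have hsplit :
      #{a ∈ Icc A B | (a + c) % 3 = 0} + #{a ∈ Icc A B | (a + c) % 3 ≠ 0} = #(Icc A B) :=
    card_filter_add_card_filter_not _
  rw [Int.card_Icc] at hremoved hsplit
  omega

theorem mem_T_iff {r : ℤ} {p : ℤ × ℤ} :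
    p ∈ T r ↔ f p ≠ 0 ∧ -r ≤ p.2 ∧ p.2 < r ∧ |2 * p.1 - p.2| < 2 * r := by
  simp only [T, V, mem_filter, mem_product, mem_Icc, abs_le, abs_lt]
  omega

theorem card_filter_snd_T_eq {r b : ℤ} (hb : b ∈ Icc (-r) (r - 1)) :
    #{p ∈ T r | p.2 = b} =
      #{a ∈ Icc ((b - 2 * r + 2) / 2) ((b + 2 * r - 1) / 2) | (a + b) % 3 ≠ 0} := by
  rw [mem_Icc] at hb
  refine card_bij' (fun p _ => p.1) (fun a _ => (a, b)) (fun p hp => ?_) (fun a ha => ?_)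
    (fun p hp => ?_) (fun _ _ => rfl)
  · simp only [mem_filter, mem_T_iff, f, mem_Icc, abs_lt] at hp ⊢
    omega
  · simp only [mem_filter, mem_T_iff, f, mem_Icc, abs_lt, and_true] at ha ⊢
    omega
  · exact Prod.ext rfl (mem_filter.1 hp).2.symm

theorem Int.sum_Icc_neg_emod_two {r : ℤ} (hr : 0 ≤ r) :
    ∑ b ∈ Icc (-r) (r - 1), b % 2 = r := by
  -- `b ↦ -1 - b` permutes the interval and flips parity.
  have hreflect : ∑ b ∈ Icc (-r) (r - 1), (-1 - b) % 2 = ∑ b ∈ Icc (-r) (r - 1), b % 2 :=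
    sum_nbij' (fun b => -1 - b) (fun b => -1 - b)
      (fun b hb => by simp only [mem_Icc] at *; omega)
      (fun b hb => by simp only [mem_Icc] at *; omega)
      (fun b _ => by ring) (fun b _ => by ring) (fun b _ => rfl)
  have hpair : ∑ b ∈ Icc (-r) (r - 1), (b % 2 + (-1 - b) % 2) = 2 * r := by
    rw [sum_congr rfl (fun b _ => show b % 2 + (-1 - b) % 2 = 1 by omega), sum_const,
      Int.card_Icc, nsmul_one]
    omega
  rw [sum_add_distrib, hreflect] at hpair
  omega

/-- Lower bound on the number of triangles: `3·|T(r)| ≥ 8r² − 6r`,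
i.e. `|T(r)| ≥ (8/3)r² − 2r`. -/
theorem card_T_lower (r : ℤ) (hr : 1 ≤ r) :
    8 * r ^ 2 - 6 * r ≤ 3 * ((T r).card : ℤ) := by
  have hrow (b : ℤ) (hb : b ∈ Icc (-r) (r - 1)) :
      4 * r - 4 + 2 * (b % 2) ≤ 3 * (#{p ∈ T r | p.2 = b} : ℤ) := by
    rw [card_filter_snd_T_eq hb]
    have := Int.two_mul_sub_le_three_mul_card_Icc_filter_emod_three_ne_zero
      ((b - 2 * r + 2) / 2) ((b + 2 * r - 1) / 2) b
    omega
  have hmaps : Set.MapsTo Prod.snd (T r : Set (ℤ × ℤ)) (Icc (-r) (r - 1) : Set ℤ) :=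
    fun p hp => by rw [mem_coe, mem_T_iff] at hp; rw [mem_coe, mem_Icc]; omega
  calc 8 * r ^ 2 - 6 * r = ∑ b ∈ Icc (-r) (r - 1), (4 * r - 4 + 2 * (b % 2)) := by
        rw [sum_add_distrib, sum_const, ← mul_sum, Int.sum_Icc_neg_emod_two (by omega),
          Int.card_Icc, nsmul_eq_mul, show r - 1 + 1 - -r = 2 * r by ring,
          Int.toNat_of_nonneg (by omega)]
        ring
    _ ≤ ∑ b ∈ Icc (-r) (r - 1), 3 * (#{p ∈ T r | p.2 = b} : ℤ) := sum_le_sum hrow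
    _ = 3 * #(T r) := by
        rw [← mul_sum, card_eq_sum_card_fiberwise hmaps]
        push_cast
        rfl
end

section
/- Combinatorial core of the compound converse (Theorem 5): let r ≥ 1 and M ≥ 1 be integers, define T̂(r) = {(a,b) ∈ ℤ² : (a+b) mod 3 = 2 and all three points (a,b), (a,b+1), (a+1,b+1) lie in V(r)} with the triangle indexed by (a,b) having vertex set {(a,b), (a,b+1), (a+1,b+1)}, and let V̂_ex(r) = {v ∈ V(r) : v belongs to no triangle of T̂(r)}. For any d : V(r) → ℕ satisfying d_v ≤ M for every v ∈ V(r) and d_u + d_v ≤ M for every edge {u,v} ∈ E(r), one has Σ_{v ∈ V(r)} d_v ≤ ⌊3M/2⌋·|T̂(r)| + M·|V̂_ex(r)|. -/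
/-- Adjacency (edge) relation of the cellular interference graph: `{u,v}` is an
edge iff `u, v ∈ V r` and there is `(a,b) ∈ ℤ²` with `(a+b) mod 3 ≠ 0` such that
`{u,v}` is one of `{(a,b),(a,b+1)}`, `{(a,b),(a+1,b+1)}`, `{(a,b+1),(a+1,b+1)}`. -/
def Adj (r : ℤ) (u v : ℤ × ℤ) : Prop :=
  u ∈ V r ∧ v ∈ V r ∧ ∃ a b : ℤ, (a + b) % 3 ≠ 0 ∧
    ( ({u, v} : Set (ℤ × ℤ)) = {(a, b), (a, b + 1)} ∨
      ({u, v} : Set (ℤ × ℤ)) = {(a, b), (a + 1, b + 1)} ∨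
      ({u, v} : Set (ℤ × ℤ)) = {(a, b + 1), (a + 1, b + 1)} )

/-- The disjoint triangle packing `T̂(r)`: indices `(a,b)` with
`(a+b) mod 3 = 2` such that all of `(a,b)`, `(a,b+1)`, `(a+1,b+1)` lie in `V r`. -/
noncomputable def That (r : ℤ) : Finset (ℤ × ℤ) :=
  (V r).filter (fun p => f p = 2 ∧ (p.1, p.2 + 1) ∈ V r ∧ (p.1 + 1, p.2 + 1) ∈ V r)

/-- Vertices of `V(r)` belonging to no triangle of `T̂(r)`. -/
noncomputable def VexHat (r : ℤ) : Finset (ℤ × ℤ) :=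
  (V r).filter (fun v => ∀ p ∈ That r, v ∉ triVerts p)

/-! The triangles of `T̂(r)` are indexed by points with `f = 2`, and the three vertices of the
triangle at `p` have `f`-values `f p, f p + 1, f p + 2` (mod 3), so distinct triangles are
disjoint. On a triangle the three edge constraints add up to `2(d_u + d_v + d_w) ≤ 3M`, and
every vertex outside the triangles is bounded by `M`. -/

lemma mem_triVerts {v p : ℤ × ℤ} :
    v ∈ triVerts p ↔ v = p ∨ v = (p.1, p.2 + 1) ∨ v = (p.1 + 1, p.2 + 1) := by
  simp [triVerts]

lemma disjoint_triVerts_of_f_eq {p q : ℤ × ℤ} (hpq : p ≠ q) (hf : f p = f q) :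
    Disjoint (triVerts p) (triVerts q) := by
  obtain ⟨p1, p2⟩ := p
  obtain ⟨q1, q2⟩ := q
  simp only [f] at hf
  rw [Finset.disjoint_left]
  intro v hvp hvq
  rw [mem_triVerts] at hvp hvq
  apply hpq
  rcases hvp with rfl | rfl | rfl <;> rcases hvq with h | h | h <;>
    simp only [Prod.mk.injEq] at h ⊢ <;> omega

lemma pairwiseDisjoint_triVerts_That (r : ℤ) :
    (↑(That r) : Set (ℤ × ℤ)).PairwiseDisjoint triVerts := fun _ hp _ hq hpq =>
  disjoint_triVerts_of_f_eq hpq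
    ((Finset.mem_filter.mp hp).2.1.trans (Finset.mem_filter.mp hq).2.1.symm)

lemma triVerts_subset_V {r : ℤ} {p : ℤ × ℤ} (hp : p ∈ That r) : triVerts p ⊆ V r := by
  obtain ⟨hpV, -, h2V, h3V⟩ := Finset.mem_filter.mp hp
  intro v hv
  rcases mem_triVerts.mp hv with rfl | rfl | rfl <;> assumption

lemma V_sdiff_VexHat (r : ℤ) : V r \ VexHat r = (That r).biUnion triVerts := by
  ext v
  simp only [VexHat, Finset.mem_sdiff, Finset.mem_filter, Finset.mem_biUnion, not_and,
    not_forall, not_not]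
  constructor
  · rintro ⟨hv, h⟩
    obtain ⟨p, hp, hvp⟩ := h hv
    exact ⟨p, hp, hvp⟩
  · rintro ⟨p, hp, hvp⟩
    exact ⟨triVerts_subset_V hp hvp, fun _ => ⟨p, hp, hvp⟩⟩

lemma sum_triVerts (d : ℤ × ℤ → ℕ) (p : ℤ × ℤ) :
    ∑ v ∈ triVerts p, d v = d p + d (p.1, p.2 + 1) + d (p.1 + 1, p.2 + 1) := by
  rw [triVerts, Finset.sum_insert, Finset.sum_insert, Finset.sum_singleton, add_assoc]
  · simp only [Finset.mem_singleton, Prod.ext_iff]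
    omega
  · simp only [Finset.mem_insert, Finset.mem_singleton, Prod.ext_iff]
    omega

lemma sum_triVerts_le {r : ℤ} {M : ℕ} {d : ℤ × ℤ → ℕ}
    (hedge : ∀ u v : ℤ × ℤ, Adj r u v → d u + d v ≤ M) {p : ℤ × ℤ} (hp : p ∈ That r) :
    ∑ v ∈ triVerts p, d v ≤ 3 * M / 2 := by
  obtain ⟨hpV, hf, h2V, h3V⟩ := Finset.mem_filter.mp hp
  have hne : (p.1 + p.2) % 3 ≠ 0 := by
    simp only [f] at hf
    omega
  have e1 := hedge _ _ ⟨hpV, h2V, p.1, p.2, hne, Or.inl rfl⟩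
  have e2 := hedge _ _ ⟨hpV, h3V, p.1, p.2, hne, Or.inr (Or.inl rfl)⟩
  have e3 := hedge _ _ ⟨h2V, h3V, p.1, p.2, hne, Or.inr (Or.inr rfl)⟩
  rw [sum_triVerts, Nat.le_div_iff_mul_le two_pos]
  omega

theorem compound_converse_core_general (r : ℤ) (M : ℕ)
    (d : ℤ × ℤ → ℕ)
    (hd : ∀ v ∈ V r, d v ≤ M)
    (hedge : ∀ u v : ℤ × ℤ, Adj r u v → d u + d v ≤ M) :
    ∑ v ∈ V r, d v ≤ (3 * M / 2) * (That r).card + M * (VexHat r).card := by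
  have hsub : VexHat r ⊆ V r := Finset.filter_subset _ _
  calc ∑ v ∈ V r, d v = ∑ p ∈ That r, ∑ v ∈ triVerts p, d v + ∑ v ∈ VexHat r, d v := by
        rw [← Finset.sum_biUnion (pairwiseDisjoint_triVerts_That r), ← V_sdiff_VexHat,
          Finset.sum_sdiff hsub]
    _ ≤ (That r).card • (3 * M / 2) + (VexHat r).card • M :=
        add_le_add (Finset.sum_le_card_nsmul _ _ _ fun _ hp => sum_triVerts_le hedge hp)
          (Finset.sum_le_card_nsmul _ _ _ fun v hv => hd v (hsub hv))
    _ = (3 * M / 2) * (That r).card + M * (VexHat r).card := by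
        simp only [smul_eq_mul, mul_comm]

/-- **Combinatorial core of the compound converse (Theorem 5).** If
`d : V(r) → ℕ` satisfies `d_v ≤ M` for all `v ∈ V(r)` and `d_u + d_v ≤ M` on
every edge, then `Σ_{v ∈ V(r)} d_v ≤ ⌊3M/2⌋·|T̂(r)| + M·|V̂_ex(r)|`
(natural division is floor). -/
theorem compound_converse_core (r : ℤ) (hr : 1 ≤ r) (M : ℕ) (hM : 1 ≤ M)
    (d : ℤ × ℤ → ℕ)
    (hd : ∀ v ∈ V r, d v ≤ M)
    (hedge : ∀ u v : ℤ × ℤ, Adj r u v → d u + d v ≤ M) :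
    ∑ v ∈ V r, d v ≤ (3 * M / 2) * (That r).card + M * (VexHat r).card :=
  compound_converse_core_general r M d hd hedge
end
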